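/- arXiv:2003.13381 — 9 statements merged into one kernel-verified Lean document; each statement's English description precedes it below -/
import Mathlib

section
/- If S is a numerical semigroup, d ≥ 2 a natural number, and γ a natural number coprime to d with γ > d·F(S) (where F(S) is the Frobenius number of S), then the set dS + ℕγ = {d·s + k·γ : s ∈ S, k ∈ ℕ} is a numerical semigroup (i.e., it is closed under addition, contains 0, and has finite complement in ℕ). -/
/-- A numerical semigroup: a subset of ℕ containing 0, closed under addition,
with finite complement. -/
def IsNumericalSemigroup (S : Set ℕ) : Prop :=
  0 ∈ S ∧ (∀ a ∈ S, ∀ b ∈ S, a + b ∈ S) ∧ Sᶜ.Finite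

/-- Frobenius number, as an integer (so that F(ℕ) = -1). -/
noncomputable def Frob (S : Set ℕ) : ℤ :=
  sSup (((fun n : ℕ => (n : ℤ)) '' Sᶜ) ∪ {-1})

/-- Submonoid of ℕ generated by a set. -/
def GenSg (A : Set ℕ) : Set ℕ := (AddSubmonoid.closure A : Set ℕ)

/-- The gluing S ⊕_{d,γ} ℕ = d·S + ℕ·γ. -/
def Gluing (S : Set ℕ) (d γ : ℕ) : Set ℕ :=
  {x | ∃ s ∈ S, ∃ k : ℕ, x = d * s + k * γ}

/-- e_k = gcd(v₀, …, v_k). -/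
def ee (v : ℕ → ℕ) (k : ℕ) : ℕ := (Finset.range (k + 1)).gcd v

/-- (v₀,…,v_h) is a characteristic sequence. -/
def IsCharSeq (h : ℕ) (v : ℕ → ℕ) : Prop :=
  (∀ i ≤ h, 0 < v i) ∧
  (∀ k, 1 ≤ k → k ≤ h → ee v k < ee v (k - 1)) ∧
  ee v h = 1 ∧
  ∀ k, 1 ≤ k → k + 1 ≤ h → ee v (k - 1) * v k < ee v k * v (k + 1)

/-- T is a GSI-semigroup: T = S ⊕_{d,γ} ℕ where S = ⟨A⟩ is a numerical
semigroup, d ≥ 2, gcd(d,γ)=1 and γ > max{d·F(S), d·(max A)}. -/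
def IsGSI (T : Set ℕ) : Prop :=
  ∃ (A : Finset ℕ) (d γ : ℕ), A.Nonempty ∧ 2 ≤ d ∧ Nat.Coprime d γ ∧
    IsNumericalSemigroup (GenSg ↑A) ∧
    (γ : ℤ) > d * Frob (GenSg ↑A) ∧ (∀ a ∈ A, d * a < γ) ∧
    T = Gluing (GenSg ↑A) d γ

lemma mem_of_frob_lt {S : Set ℕ} (hS : IsNumericalSemigroup S) {n : ℕ}
    (h : Frob S < (n : ℤ)) : n ∈ S := by
  by_contra hn
  have hbdd : BddAbove (((fun n : ℕ => (n : ℤ)) '' Sᶜ) ∪ {-1}) :=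
    ((hS.2.2.image _).union (Set.finite_singleton _)).bddAbove
  have : (n : ℤ) ≤ Frob S := le_csSup hbdd (Or.inl ⟨n, hn, rfl⟩)
  linarith

theorem gluing_with_nat_is_numerical_semigroup (S : Set ℕ)
    (hS : IsNumericalSemigroup S) (d γ : ℕ) (hd : 2 ≤ d)
    (hco : Nat.Coprime d γ) (hγ : (γ : ℤ) > d * Frob S) :
    IsNumericalSemigroup (Gluing S d γ) := by
  obtain ⟨h0, hadd, hfin⟩ := hS
  refine ⟨⟨0, h0, 0, by ring⟩, ?_, ?_⟩
  · rintro a ⟨s, hs, k, rfl⟩ b ⟨t, ht, l, rfl⟩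
    exact ⟨s + t, hadd s hs t ht, k + l, by ring⟩
  · have hγ0 : 0 < γ := by
      rcases Nat.eq_zero_or_pos γ with h | h
      · exfalso; rw [h] at hco; unfold Nat.Coprime at hco; simp at hco; omega
      · exact h
    set F : ℕ := (Frob S).toNat + 1 with hF
    have hFgt : ∀ s : ℕ, F ≤ s → s ∈ S := by
      intro s hs
      refine mem_of_frob_lt ⟨h0, hadd, hfin⟩ ?_
      have : Frob S ≤ ((Frob S).toNat : ℤ) := Int.self_le_toNat _
      have : ((F : ℤ)) ≤ (s : ℤ) := by exact_mod_cast hs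
      omega
    set M : ℕ := d * γ + d * F with hM
    apply Set.Finite.subset (Set.finite_Iio M)
    intro n hn
    simp only [Set.mem_compl_iff] at hn
    by_contra hnM
    simp only [Set.mem_Iio, not_lt] at hnM
    apply hn
    haveI : NeZero d := ⟨by omega⟩
    set k : ℕ := ((n : ZMod d) * (γ : ZMod d)⁻¹).val with hk
    have hkd : k < d := ZMod.val_lt _
    have hunit : IsUnit (γ : ZMod d) := by
      rw [ZMod.isUnit_iff_coprime]
      exact hco.symm
    have hcast : ((k * γ : ℕ) : ZMod d) = (n : ZMod d) := by
      push_cast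
      rw [hk, ZMod.natCast_val, ZMod.cast_id, mul_assoc,
        ZMod.inv_mul_of_unit _ hunit, mul_one]
    have hmod : k * γ ≡ n [MOD d] := (ZMod.natCast_eq_natCast_iff _ _ _).mp hcast
    have hkγn : k * γ ≤ n := by
      have : k * γ ≤ (d - 1) * γ := Nat.mul_le_mul_right _ (by omega)
      have : (d - 1) * γ < d * γ := by
        have := (Nat.mul_lt_mul_right hγ0).mpr (show d - 1 < d by omega)
        exact this
      omega
    obtain ⟨s, hsd⟩ := (Nat.modEq_iff_dvd' hkγn).mp hmod
    have hsF : F ≤ s := by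
      have h1 : n - k * γ ≥ d * F := by
        have : k * γ ≤ (d - 1) * γ := Nat.mul_le_mul_right _ (by omega)
        have h2 : (d-1) * γ + γ = d * γ := by
          have : d - 1 + 1 = d := by omega
          calc (d-1) * γ + γ = (d - 1 + 1) * γ := by ring
            _ = d * γ := by rw [this]
        omega
      rw [hsd] at h1
      exact Nat.le_of_mul_le_mul_left h1 (by omega)
    refine ⟨s, hFgt s hsF, k, ?_⟩
    omega
end

section
/- Let (v₀,…,v_h), h ≥ 2, be a characteristic sequence with v₁ < v₀. If v₀ is not a multiple of v₁, then (v₁,v₀,v₂,…,v_h) is a characteristic sequence; if v₀ is a multiple of v₁, then (v₁,v₂,…,v_h) is a characteristic sequence. -/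
/-!
Swapping v₀ and v₁ leaves e_k unchanged for k ≥ 1, so the only conditions that change are the
first drop, now e₁ < v₁, which holds because v₁ ∤ v₀, and the first growth condition, which for
both sequences reads v₀·v₁ < e₁·v₂. When v₁ ∣ v₀, dropping v₀ leaves e_k unchanged for k ≥ 1,
so the conditions for (v₁, …, v_h) are those for (v₀, …, v_h) shifted by one index.
-/

lemma ee_zero (v : ℕ → ℕ) : ee v 0 = v 0 := by simp [ee]

lemma ee_dvd (v : ℕ → ℕ) {i k : ℕ} (hik : i ≤ k) : ee v k ∣ v i :=
  Finset.gcd_dvd (Finset.mem_range.2 (Nat.lt_succ_of_le hik))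

lemma ee_comp_perm (v : ℕ → ℕ) (σ : Equiv.Perm ℕ) {k : ℕ}
    (hσ : {i | σ i ≠ i} ⊆ Finset.range (k + 1)) : ee (v ∘ σ) k = ee v k := by
  classical
  conv_rhs => rw [ee, ← Finset.map_perm hσ, Finset.map_eq_image, Finset.gcd_image]
  rfl

lemma ee_comp_swap (v : ℕ → ℕ) {k : ℕ} (hk : 1 ≤ k) : ee (v ∘ Equiv.swap 0 1) k = ee v k := by
  refine ee_comp_perm v _ fun i hi => Finset.mem_range.2 ?_
  by_contra hik
  exact hi (Equiv.swap_apply_of_ne_of_ne (by omega) (by omega))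

lemma ee_succ_eq_gcd_tail (v : ℕ → ℕ) (k : ℕ) :
    ee v (k + 1) = Nat.gcd (v 0) (ee (fun i => v (i + 1)) k) := by
  rw [ee, ee, Finset.range_add_one', Finset.gcd_insert, Finset.map_eq_image, Finset.gcd_image]
  rfl

lemma ee_tail (v : ℕ → ℕ) (hv : v 1 ∣ v 0) (k : ℕ) : ee (fun i => v (i + 1)) k = ee v (k + 1) := by
  rw [ee_succ_eq_gcd_tail, Nat.gcd_eq_right ((ee_dvd _ (Nat.zero_le k)).trans hv)]

lemma isCharSeq_iff {h : ℕ} {v : ℕ → ℕ} :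
    IsCharSeq h v ↔ (∀ i ≤ h, 0 < v i) ∧ (∀ k < h, ee v (k + 1) < ee v k) ∧ ee v h = 1 ∧
      ∀ k, k + 2 ≤ h → ee v k * v (k + 1) < ee v (k + 1) * v (k + 2) := by
  refine and_congr_right fun _ => and_congr ⟨fun H k hk => ?_, fun H k hk₁ hk₂ => ?_⟩
    (and_congr_right fun _ => ⟨fun H k hk => ?_, fun H k hk₁ hk₂ => ?_⟩)
  · simpa using H (k + 1) (by omega) hk
  · obtain ⟨k, rfl⟩ := Nat.exists_eq_add_of_le' hk₁
    simpa using H k hk₂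
  · simpa using H (k + 1) (by omega) hk
  · obtain ⟨k, rfl⟩ := Nat.exists_eq_add_of_le' hk₁
    simpa using H k hk₂

namespace IsCharSeq

variable {h : ℕ} {v : ℕ → ℕ}

theorem comp_swap (hv : IsCharSeq h v) (hh : 1 ≤ h) (hndvd : ¬ v 1 ∣ v 0) :
    IsCharSeq h (v ∘ Equiv.swap 0 1) := by
  obtain ⟨hpos, hdec, htop, hgrow⟩ := isCharSeq_iff.1 hv
  have hee : ∀ k, ee (v ∘ Equiv.swap 0 1) (k + 1) = ee v (k + 1) := fun k =>
    ee_comp_swap v (Nat.le_add_left 1 k)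
  have he₁ : ee v 1 < v 1 :=
    (Nat.le_of_dvd (hpos 1 hh) (ee_dvd v le_rfl)).lt_of_ne
      fun he => hndvd (he ▸ ee_dvd v (Nat.zero_le 1))
  refine isCharSeq_iff.2 ⟨fun i hi => hpos _ ?_, fun k hk => ?_,
    (ee_comp_swap v hh).trans htop, fun k hk => ?_⟩
  · rw [Equiv.swap_apply_def]
    split_ifs <;> omega
  · rcases k with _ | k
    · simpa [hee, ee_zero] using he₁
    · simpa [hee] using hdec (k + 1) hk
  · rcases k with _ | k
    · simpa [hee, Equiv.swap_apply_of_ne_of_ne, ee_zero, mul_comm] using hgrow 0 hk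
    · simpa [hee, Equiv.swap_apply_of_ne_of_ne] using hgrow (k + 1) hk

theorem tail (hv : IsCharSeq (h + 1) v) (hdvd : v 1 ∣ v 0) : IsCharSeq h (fun i => v (i + 1)) := by
  obtain ⟨hpos, hdec, htop, hgrow⟩ := isCharSeq_iff.1 hv
  exact isCharSeq_iff.2 ⟨fun i hi => hpos (i + 1) (by omega),
    fun k hk => by simpa [ee_tail v hdvd] using hdec (k + 1) (by omega),
    by simpa [ee_tail v hdvd] using htop,
    fun k hk => by simpa [ee_tail v hdvd] using hgrow (k + 1) (by omega)⟩

end IsCharSeq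

theorem charseq_swap_general (h : ℕ) (v : ℕ → ℕ) (hh : 2 ≤ h)
    (hv : IsCharSeq h v) :
    (¬ v 1 ∣ v 0 →
      IsCharSeq h (fun i => if i = 0 then v 1 else if i = 1 then v 0 else v i)) ∧
    (v 1 ∣ v 0 → IsCharSeq (h - 1) (fun i => v (i + 1))) := by
  refine ⟨fun hndvd => ?_, fun hdvd => ?_⟩
  · have hw : (fun i => if i = 0 then v 1 else if i = 1 then v 0 else v i) =
        v ∘ Equiv.swap 0 1 := by
      funext i
      simp only [Function.comp_apply, Equiv.swap_apply_def, apply_ite v]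
    exact hw ▸ hv.comp_swap (by omega) hndvd
  · obtain ⟨g, rfl⟩ : ∃ g, h = g + 1 := ⟨h - 1, by omega⟩
    exact hv.tail hdvd

theorem charseq_swap (h : ℕ) (v : ℕ → ℕ) (hh : 2 ≤ h)
    (hv : IsCharSeq h v) (hlt : v 1 < v 0) :
    (¬ v 1 ∣ v 0 →
      IsCharSeq h (fun i => if i = 0 then v 1 else if i = 1 then v 0 else v i)) ∧
    (v 1 ∣ v 0 → IsCharSeq (h - 1) (fun i => v (i + 1))) :=
  charseq_swap_general h v hh hv
end

section
/- Let S = ⟨v₀,…,v_{h−1}⟩ be a strongly increasing numerical semigroup generated by the characteristic sequence (v₀,…,v_{h−1}) with embedding dimension h ≥ 2, and let d > 1 and γ > d·gcd(v₀,…,v_{h−2})·v_{h−1} be coprime integers. Then the gluing S ⊕_{d,γ} ℕ = ⟨dv₀,…,dv_{h−1},γ⟩ is a strongly increasing numerical semigroup, i.e., (dv₀,…,dv_{h−1},γ) is a characteristic sequence. -/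
/-! The partial gcds of `(d v₀, …, d v_{h-1}, γ)` are `d e₀, …, d e_{h-1} = d` and then
`gcd(d, γ) = 1`. Scaling by `d` preserves the inequalities among the first `h` terms, and the one
new growth condition `d e_{h-2} · d v_{h-1} < d · γ` is `d` times the hypothesis on `γ`. The two
semigroups agree because the closure of a union is the sum of the closures, and multiplication
by `d` is an additive map, so it commutes with taking closures. -/

lemma gluing_genSg_eq_genSg (A : Set ℕ) (d γ : ℕ) :
    Gluing (GenSg A) d γ = GenSg ((d * ·) '' A ∪ {γ}) := by
  ext x
  have hmul : (d * ·) '' A = AddMonoidHom.mulLeft d '' A := rfl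
  unfold GenSg
  rw [SetLike.mem_coe, AddSubmonoid.closure_union, AddSubmonoid.mem_sup, hmul,
    ← AddMonoidHom.map_mclosure]
  simp only [AddSubmonoid.mem_map, AddSubmonoid.mem_closure_singleton, AddMonoidHom.coe_mulLeft,
    smul_eq_mul]
  constructor
  · rintro ⟨s, hs, k, rfl⟩
    exact ⟨_, ⟨s, hs, rfl⟩, _, ⟨k, rfl⟩, rfl⟩
  · rintro ⟨_, ⟨s, hs, rfl⟩, _, ⟨k, rfl⟩, rfl⟩
    exact ⟨s, hs, k, rfl⟩

lemma ee_succ (v : ℕ → ℕ) (k : ℕ) : ee v (k + 1) = Nat.gcd (v (k + 1)) (ee v k) := by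
  rw [ee, Finset.range_add_one, Finset.gcd_insert]
  rfl

lemma ee_eq_mul_of_forall_le {v w : ℕ → ℕ} {d k : ℕ} (hw : ∀ i ≤ k, w i = d * v i) :
    ee w k = d * ee v k := by
  have hw' : ∀ i ∈ Finset.range (k + 1), w i = d * v i :=
    fun i hi => hw i (Nat.lt_succ_iff.mp (Finset.mem_range.mp hi))
  rw [ee, ee, Finset.gcd_congr rfl hw', Finset.gcd_mul_left, normalize_eq]

theorem IsCharSeq.glue {n : ℕ} {v w : ℕ → ℕ} {d γ : ℕ} (hv : IsCharSeq n v)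
    (hw : ∀ i ≤ n, w i = d * v i) (hwγ : w (n + 1) = γ) (hd : 1 < d)
    (hco : Nat.Coprime d γ) (hγ : d * ee v (n - 1) * v n < γ) :
    IsCharSeq (n + 1) w := by
  obtain ⟨hpos, hdec, hone, hgrow⟩ := hv
  have hee : ∀ k ≤ n, ee w k = d * ee v k :=
    fun k hk => ee_eq_mul_of_forall_le fun i hi => hw i (hi.trans hk)
  have hee_n : ee w n = d := by rw [hee n le_rfl, hone, mul_one]
  have hee_last : ee w (n + 1) = 1 := by rw [ee_succ, hwγ, hee_n, hco.symm]
  refine ⟨fun i hi => ?_, fun k hk1 hk => ?_, hee_last, fun k hk1 hk => ?_⟩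
  · rcases Nat.lt_or_eq_of_le hi with hi | rfl
    · rw [hw i (by omega)]
      exact Nat.mul_pos (by omega) (hpos i (by omega))
    · rw [hwγ]
      omega
  · rcases Nat.lt_or_eq_of_le hk with hk | rfl
    · rw [hee k (by omega), hee (k - 1) (by omega)]
      exact Nat.mul_lt_mul_of_pos_left (hdec k hk1 (by omega)) (by omega)
    · rw [hee_last, Nat.add_sub_cancel, hee_n]
      exact hd
  · rcases Nat.lt_or_eq_of_le hk with hk | hk
    · rw [hee (k - 1) (by omega), hee k (by omega), hw k (by omega), hw (k + 1) (by omega)]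
      have := hgrow k hk1 (by omega)
      calc d * ee v (k - 1) * (d * v k) = d * d * (ee v (k - 1) * v k) := by ring
        _ < d * d * (ee v k * v (k + 1)) := Nat.mul_lt_mul_of_pos_left this (by positivity)
        _ = d * ee v k * (d * v (k + 1)) := by ring
    · obtain rfl : n = k := by omega
      rw [hee (n - 1) (by omega), hee_n, hw n le_rfl, hwγ]
      calc d * ee v (n - 1) * (d * v n) = d * (d * ee v (n - 1) * v n) := by ring
        _ < d * γ := Nat.mul_lt_mul_of_pos_left hγ (by omega)

theorem gluing_of_SI_is_SI_general (h : ℕ) (v : ℕ → ℕ) (hh : 2 ≤ h)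
    (hv : IsCharSeq (h - 1) v)
    (d γ : ℕ) (hd : 1 < d) (hco : Nat.Coprime d γ)
    (hγ : d * ee v (h - 2) * v (h - 1) < γ) :
    IsCharSeq h (fun i => if i < h then d * v i else γ) ∧
    Gluing (GenSg (v '' {i | i ≤ h - 1})) d γ =
      GenSg ((fun i => if i < h then d * v i else γ) '' {i | i ≤ h}) := by
  obtain ⟨n, rfl⟩ : ∃ n, h = n + 1 := ⟨h - 1, by omega⟩
  rw [Nat.add_sub_cancel] at hv hγ ⊢
  rw [show n + 1 - 2 = n - 1 by omega] at hγ
  set w : ℕ → ℕ := fun i => if i < n + 1 then d * v i else γ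
  have hw : ∀ i ≤ n, w i = d * v i := fun i hi => if_pos (Nat.lt_succ_of_le hi)
  have hwγ : w (n + 1) = γ := if_neg (lt_irrefl _)
  refine ⟨hv.glue hw hwγ hd hco hγ, ?_⟩
  have himage : w '' {i | i ≤ n + 1} = (d * ·) '' (v '' {i | i ≤ n}) ∪ {γ} := by
    change w '' Set.Iic (n + 1) = (d * ·) '' (v '' Set.Iic n) ∪ {γ}
    rw [show Set.Iic (n + 1) = insert (n + 1) (Set.Iic n) from Order.Iic_succ n,
      Set.image_insert_eq, Set.image_image, Set.image_congr (s := Set.Iic n) hw, hwγ,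
      Set.insert_eq, Set.union_comm]
  rw [himage, gluing_genSg_eq_genSg]

theorem gluing_of_SI_is_SI (h : ℕ) (v : ℕ → ℕ) (hh : 2 ≤ h)
    (hv : IsCharSeq (h - 1) v)
    (hinj : ∀ i j, i ≤ h - 1 → j ≤ h - 1 → v i = v j → i = j)
    (hmin : ∀ B ⊂ v '' {i | i ≤ h - 1},
      GenSg B ≠ GenSg (v '' {i | i ≤ h - 1}))
    (d γ : ℕ) (hd : 1 < d) (hco : Nat.Coprime d γ)
    (hγ : d * ee v (h - 2) * v (h - 1) < γ) :
    IsCharSeq h (fun i => if i < h then d * v i else γ) ∧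
    Gluing (GenSg (v '' {i | i ≤ h - 1})) d γ =
      GenSg ((fun i => if i < h then d * v i else γ) '' {i | i ≤ h}) :=
  gluing_of_SI_is_SI_general h v hh hv d γ hd hco hγ
end

section
/- Let S̄ = ⟨v̄₀,…,v̄_h⟩ be a strongly increasing numerical semigroup with embedding dimension h+1 ≥ 3, generated by the characteristic sequence (v̄₀,…,v̄_h). Set d = gcd(v̄₀,…,v̄_{h−1}), γ = v̄_h, and v_i = v̄_i/d for 0 ≤ i ≤ h−1. Then (v₀,…,v_{h−1}) is a characteristic sequence, S = ⟨v₀,…,v_{h−1}⟩ is strongly increasing with embedding dimension h, S̄ = S ⊕_{d,γ} ℕ, and γ > d·gcd(v₀,…,v_{h−2})·v_{h−1}. -/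
theorem SI_decomposes_as_gluing (h : ℕ) (w : ℕ → ℕ) (hh : 2 ≤ h)
    (hw : IsCharSeq h w)
    (hinj : ∀ i j, i ≤ h → j ≤ h → w i = w j → i = j)
    (hmin : ∀ B ⊂ w '' {i | i ≤ h}, GenSg B ≠ GenSg (w '' {i | i ≤ h})) :
    IsCharSeq (h - 1) (fun i => w i / ee w (h - 1)) ∧
    (∀ B ⊂ (fun i => w i / ee w (h - 1)) '' {i | i ≤ h - 1},
      GenSg B ≠ GenSg ((fun i => w i / ee w (h - 1)) '' {i | i ≤ h - 1})) ∧
    GenSg (w '' {i | i ≤ h}) =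
      Gluing (GenSg ((fun i => w i / ee w (h - 1)) '' {i | i ≤ h - 1}))
        (ee w (h - 1)) (w h) ∧
    ee w (h - 1) * ee (fun i => w i / ee w (h - 1)) (h - 2) *
        (w (h - 1) / ee w (h - 1)) < w h := by
  obtain ⟨hpos, hdec, hone, hrat⟩ := hw
  set d := ee w (h - 1) with hd
  set v : ℕ → ℕ := fun i => w i / d with hv
  have hdvd : ∀ i ≤ h - 1, d ∣ w i := by
    intro i hi
    exact Finset.gcd_dvd (Finset.mem_range.2 (by omega))
  have hdpos : 0 < d := by
    rcases Nat.eq_zero_or_pos d with h0 | h0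
    · exfalso
      have h1 := hdvd 0 (Nat.zero_le _)
      rw [h0, Nat.zero_dvd] at h1
      have := hpos 0 (Nat.zero_le _)
      omega
    · exact h0
  have hwv : ∀ i ≤ h - 1, w i = d * v i := fun i hi =>
    (Nat.mul_div_cancel' (hdvd i hi)).symm
  have hee : ∀ k ≤ h - 1, ee w k = d * ee v k := by
    intro k hk
    have hcong : ∀ i ∈ Finset.range (k + 1), w i = d * v i := fun i hi =>
      hwv i (by have := Finset.mem_range.1 hi; omega)
    calc ee w k = (Finset.range (k + 1)).gcd (fun i => d * v i) :=
          Finset.gcd_congr rfl hcong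
      _ = d * ee v k := by rw [Finset.gcd_mul_left]; simp [ee]
  -- Part 1
  have part1 : IsCharSeq (h - 1) v := by
    refine ⟨?_, ?_, ?_, ?_⟩
    · intro i hi
      exact Nat.div_pos (Nat.le_of_dvd (hpos i (by omega)) (hdvd i hi)) hdpos
    · intro k hk1 hk2
      have key : d * ee v k < d * ee v (k - 1) := by
        rw [← hee k (by omega), ← hee (k - 1) (by omega)]
        exact hdec k hk1 (by omega)
      exact lt_of_mul_lt_mul_left key (Nat.zero_le d)
    · have key : d * ee v (h - 1) = d * 1 := by
        rw [← hee (h - 1) le_rfl, mul_one]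
      exact Nat.eq_of_mul_eq_mul_left hdpos key
    · intro k hk1 hk2
      have key := hrat k hk1 (by omega)
      rw [hee (k - 1) (by omega), hee k (by omega), hwv k (by omega),
        hwv (k + 1) (by omega), mul_mul_mul_comm,
        mul_mul_mul_comm d (ee v k)] at key
      exact lt_of_mul_lt_mul_left key (Nat.zero_le _)
  -- setup for parts 2 and 3
  set W : Set ℕ := w '' {i | i ≤ h} with hW
  set A : Set ℕ := v '' {i | i ≤ h - 1} with hA
  set f : ℕ →+ ℕ := AddMonoidHom.mulLeft d with hf
  have hfv : ∀ i ≤ h - 1, f (v i) = w i := by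
    intro i hi
    show d * v i = w i
    exact (hwv i hi).symm
  have hfA : f '' A = w '' {i | i ≤ h - 1} := by
    ext x
    constructor
    · rintro ⟨y, ⟨i, hi, rfl⟩, rfl⟩
      exact ⟨i, hi, (hfv i hi).symm⟩
    · rintro ⟨i, hi, rfl⟩
      exact ⟨v i, ⟨i, hi, rfl⟩, hfv i hi⟩
  -- Part 2
  have part2 : ∀ B ⊂ A, GenSg B ≠ GenSg A := by
    intro B hB hBA
    obtain ⟨hBsub, hne⟩ := Set.ssubset_iff_subset_ne.1 hB
    obtain ⟨x, hxA, hxB⟩ : ∃ x ∈ A, x ∉ B := by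
      by_contra hc
      push_neg at hc
      exact hne (Set.Subset.antisymm hBsub hc)
    obtain ⟨j, hj, rfl⟩ := hxA
    simp only [Set.mem_setOf_eq] at hj
    have hBsub' : B ⊆ A \ {v j} := fun b hb =>
      ⟨hBsub hb, fun hbj => hxB (hbj ▸ hb)⟩
    have hvj : v j ∈ AddSubmonoid.closure (A \ {v j}) := by
      have h1 : v j ∈ AddSubmonoid.closure A :=
        AddSubmonoid.subset_closure ⟨j, hj, rfl⟩
      have h2 : v j ∈ AddSubmonoid.closure B := by
        have h3 : v j ∈ GenSg B := by rw [hBA]; exact h1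
        exact h3
      exact AddSubmonoid.closure_mono hBsub' h2
    have hwj : w j ∈ AddSubmonoid.closure (W \ {w j}) := by
      have h1 : f (v j) ∈ (AddSubmonoid.closure (A \ {v j})).map f :=
        ⟨v j, hvj, rfl⟩
      rw [AddMonoidHom.map_mclosure] at h1
      rw [hfv j hj] at h1
      refine AddSubmonoid.closure_mono ?_ h1
      rintro x hxm
      obtain ⟨y, ⟨hyA, hyj⟩, rfl⟩ := hxm
      obtain ⟨i, hi, rfl⟩ := hyA
      simp only [Set.mem_setOf_eq] at hi
      rw [hfv i hi]
      refine ⟨⟨i, by simp only [Set.mem_setOf_eq]; omega, rfl⟩, ?_⟩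
      intro hij
      apply hyj
      simp only [Set.mem_singleton_iff]
      have : d * v i = d * v j := by
        rw [← hwv i hi, ← hwv j hj]; exact hij
      exact Nat.eq_of_mul_eq_mul_left hdpos this
    have hwjW : w j ∈ W := ⟨j, by simp only [Set.mem_setOf_eq]; omega, rfl⟩
    have hss : W \ {w j} ⊂ W := by
      refine lt_of_le_of_ne Set.diff_subset (fun heq => ?_)
      have : w j ∈ W \ {w j} := heq.symm ▸ hwjW
      exact this.2 rfl
    refine hmin (W \ {w j}) hss ?_
    have hWsub : W ⊆ (AddSubmonoid.closure (W \ {w j}) : Set ℕ) := by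
      intro x hx
      by_cases hx' : x = w j
      · exact hx' ▸ hwj
      · exact AddSubmonoid.subset_closure ⟨hx, hx'⟩
    have : AddSubmonoid.closure (W \ {w j}) = AddSubmonoid.closure W :=
      le_antisymm (AddSubmonoid.closure_mono Set.diff_subset)
        ((AddSubmonoid.closure_le).2 hWsub)
    simp only [GenSg, this]
  -- Part 3
  have hWsplit : W = f '' A ∪ {w h} := by
    rw [hfA]
    ext x
    constructor
    · rintro ⟨i, hi, rfl⟩
      by_cases hih : i = h
      · exact Or.inr (by rw [hih]; rfl)
      · exact Or.inl ⟨i, by simp only [Set.mem_setOf_eq] at hi ⊢; omega, rfl⟩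
    · rintro (⟨i, hi, rfl⟩ | hx)
      · exact ⟨i, by simp only [Set.mem_setOf_eq] at hi ⊢; omega, rfl⟩
      · exact ⟨h, by simp only [Set.mem_setOf_eq]; exact le_rfl, hx.symm⟩
  have part3 : GenSg W = Gluing (GenSg A) d (w h) := by
    ext x
    simp only [GenSg, Gluing, Set.mem_setOf_eq, SetLike.mem_coe]
    rw [hWsplit, AddSubmonoid.closure_union]
    rw [AddSubmonoid.mem_sup]
    constructor
    · rintro ⟨a, ha, b, hb, rfl⟩
      rw [← AddMonoidHom.map_mclosure] at ha
      obtain ⟨s, hs, rfl⟩ := ha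
      obtain ⟨k, rfl⟩ := AddSubmonoid.mem_closure_singleton.1 hb
      exact ⟨s, hs, k, by simp [hf, smul_eq_mul]⟩
    · rintro ⟨s, hs, k, rfl⟩
      refine ⟨d * s, ?_, k * w h, ?_, rfl⟩
      · rw [← AddMonoidHom.map_mclosure]
        exact ⟨s, hs, rfl⟩
      · exact AddSubmonoid.mem_closure_singleton.2 ⟨k, by simp [smul_eq_mul]⟩
  -- Part 4
  have part4 : d * ee v (h - 2) * v (h - 1) < w h := by
    have key := hrat (h - 1) (by omega) (by omega)
    have e1 : h - 1 - 1 = h - 2 := by omega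
    have e2 : h - 1 + 1 = h := by omega
    rw [e1, e2] at key
    -- key : ee w (h-2) * w (h-1) < ee w (h-1) * w h = d * w h
    rw [← hee (h - 2) (by omega)]
    have key2 : d * (ee w (h - 2) * v (h - 1)) < d * w h := by
      calc d * (ee w (h - 2) * v (h - 1)) = ee w (h - 2) * (d * v (h - 1)) := by ring
        _ = ee w (h - 2) * w (h - 1) := by rw [← hwv (h - 1) le_rfl]
        _ < d * w h := key
    exact lt_of_mul_lt_mul_left key2 (Nat.zero_le d)
  exact ⟨part1, part2, part3, part4⟩
end

section
/- Let S̄ = S ⊕_{d,γ} ℕ be a GSI-semigroup with S = ⟨v₀,…,v_h⟩, v₀ < ⋯ < v_h, d ≥ 2, gcd(d,γ) = 1 and γ > max{d·F(S), d·v_h}. Then for every k with 1 ≤ k ≤ d−1 and every gap α ∈ ℕ\S, the number d·α + k·γ is a gap of S̄, i.e., d(ℕ\S) + kγ ⊆ ℕ\S̄. -/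
/-- A numerical semigroup: a subset of ℕ containing 0, closed under addition,
with finite complement. -/

lemma le_Frob {S : Set ℕ} (hfin : Sᶜ.Finite) {α : ℕ} (hα : α ∉ S) :
    (α : ℤ) ≤ sSup (((fun n : ℕ => (n : ℤ)) '' Sᶜ) ∪ {-1}) := by
  apply le_csSup
  · exact ((hfin.image _).union (Set.finite_singleton _)).bddAbove
  · exact Or.inl ⟨α, hα, rfl⟩

theorem gaps_Ad' (A : Finset ℕ) (d γ : ℕ) (hd : 2 ≤ d)
    (hco : Nat.Coprime d γ) (hS : (fun S : Set ℕ => 0 ∈ S ∧ (∀ a ∈ S, ∀ b ∈ S, a + b ∈ S) ∧ Sᶜ.Finite) ((AddSubmonoid.closure (↑A : Set ℕ) : Set ℕ)))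
    (hγF : (γ : ℤ) > d * sSup (((fun n : ℕ => (n : ℤ)) '' ((AddSubmonoid.closure (↑A : Set ℕ) : Set ℕ))ᶜ) ∪ {-1})) :
    ∀ k, 1 ≤ k → k ≤ d - 1 → ∀ α : ℕ, α ∉ (AddSubmonoid.closure (↑A : Set ℕ) : Set ℕ) →
      ¬ ∃ s ∈ (AddSubmonoid.closure (↑A : Set ℕ) : Set ℕ), ∃ m : ℕ, d * α + k * γ = d * s + m * γ := by
  intro k hk1 hkd α hα ⟨s, hs, m, heq⟩
  set F := sSup (((fun n : ℕ => (n : ℤ)) '' ((AddSubmonoid.closure (↑A : Set ℕ) : Set ℕ))ᶜ) ∪ {-1}) with hF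
  have hαF : (α : ℤ) ≤ F := le_Frob hS.2.2 hα
  have hγ0 : 1 ≤ γ := by
    rcases Nat.eq_zero_or_pos γ with h | h
    · exfalso; rw [h] at hco; simp [Nat.Coprime] at hco; omega
    · exact h
  have hγF' : (F : ℤ) < γ := by
    rcases le_or_gt F 0 with h | h
    · exact lt_of_le_of_lt h (by exact_mod_cast hγ0)
    · nlinarith [hγF]
  have heqZ : (d : ℤ) * α + k * γ = d * s + m * γ := by exact_mod_cast heq
  have hdvd : (d : ℤ) ∣ ((m : ℤ) - k) * γ := ⟨α - s, by ring_nf; linarith [heqZ]⟩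
  have hcoZ : IsCoprime (d : ℤ) (γ : ℤ) := Int.isCoprime_iff_gcd_eq_one.mpr hco
  obtain ⟨t, ht⟩ := hcoZ.dvd_of_dvd_mul_right hdvd
  have hd0 : (0 : ℤ) < d := by positivity
  have hαs : (α : ℤ) - s = t * γ := by
    have : (d : ℤ) * ((α : ℤ) - s) = d * (t * γ) := by
      have : ((m : ℤ) - k) * γ = d * t * γ := by rw [ht]
      nlinarith [heqZ]
    exact mul_left_cancel₀ (ne_of_gt hd0) this
  rcases lt_trichotomy t 0 with h | h | h
  · -- m = k + d*t < 0
    have hm : (m : ℤ) = k + d * t := by linarith [ht]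
    have : (k : ℤ) ≤ (d : ℤ) - 1 := by
      have h1 : (1:ℤ) ≤ d := by exact_mod_cast Nat.one_le_of_lt hd
      have h2 : (k:ℤ) ≤ ((d-1 : ℕ) : ℤ) := by exact_mod_cast hkd
      omega
    have : (d : ℤ) * t ≤ -d := by nlinarith
    have : (0 : ℤ) ≤ m := Int.ofNat_nonneg m
    omega
  · subst h
    simp at ht
    have : α = s := by omega
    exact hα (this ▸ hs)
  · have : (γ : ℤ) ≤ α := by nlinarith [Int.ofNat_nonneg s]
    linarith


theorem gaps_Ad (A : Finset ℕ) (hA : A.Nonempty) (d γ : ℕ) (hd : 2 ≤ d)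
    (hco : Nat.Coprime d γ) (hS : IsNumericalSemigroup (GenSg ↑A))
    (hγF : (γ : ℤ) > d * Frob (GenSg ↑A)) (hγA : ∀ a ∈ A, d * a < γ) :
    ∀ k, 1 ≤ k → k ≤ d - 1 → ∀ α : ℕ, α ∉ GenSg (↑A : Set ℕ) →
      d * α + k * γ ∉ Gluing (GenSg ↑A) d γ := by
  have h := gaps_Ad' A d γ hd hco hS hγF
  intro k hk1 hkd α hα hmem
  exact h k hk1 hkd α hα hmem
end

section
/- Let S̄ = S ⊕_{d,γ} ℕ be a GSI-semigroup with S = ⟨v₀,…,v_h⟩, v₀ < ⋯ < v_h, d ≥ 2, gcd(d,γ)=1 and γ > max{d·F(S), d·v_h}. Then every integer x with dv₀ < x < γ and x ∉ dS is a gap of S̄, and every integer x with 1 ≤ x ≤ dv₀ − 1 is a gap of S̄. -/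
/-
Below γ the gluing d·S + ℕγ contributes nothing beyond d·S, since any term with a positive
multiple of γ is already at least γ. The nonzero elements of S = ⟨A⟩ are at least min A, so the
nonzero elements of d·S are at least d·min A.
-/

theorem eq_zero_or_min'_le_of_mem_genSg {A : Finset ℕ} (hA : A.Nonempty) {s : ℕ}
    (hs : s ∈ GenSg (↑A : Set ℕ)) : s = 0 ∨ A.min' hA ≤ s := by
  induction hs using AddSubmonoid.closure_induction with
  | mem a ha => exact Or.inr (A.min'_le a ha)
  | zero => exact Or.inl rfl
  | add a b _ _ ha hb => omega

theorem exists_eq_mul_of_mem_gluing_of_lt {S : Set ℕ} {d γ x : ℕ} (hx : x ∈ Gluing S d γ)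
    (hxγ : x < γ) : ∃ s ∈ S, x = d * s := by
  obtain ⟨s, hs, k, rfl⟩ := hx
  obtain rfl : k = 0 := by
    by_contra hk
    have : γ ≤ k * γ := Nat.le_mul_of_pos_left γ (Nat.pos_of_ne_zero hk)
    omega
  exact ⟨s, hs, by simp⟩

theorem gaps_below_gamma_general (A : Finset ℕ) (hA : A.Nonempty) (d γ : ℕ)
    (hγA : ∀ a ∈ A, d * a < γ) :
    (∀ x : ℕ, 1 ≤ x → x ≤ d * A.min' hA - 1 → x ∉ Gluing (GenSg ↑A) d γ) ∧
    (∀ x : ℕ, d * A.min' hA < x → x < γ →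
      (¬ ∃ s ∈ GenSg (↑A : Set ℕ), x = d * s) →
      x ∉ Gluing (GenSg ↑A) d γ) := by
  refine ⟨fun x hx1 hxm hx => ?_,
    fun x _ hxγ hnd hx => hnd (exists_eq_mul_of_mem_gluing_of_lt hx hxγ)⟩
  have hminγ : d * A.min' hA < γ := hγA _ (A.min'_mem hA)
  obtain ⟨s, hs, rfl⟩ := exists_eq_mul_of_mem_gluing_of_lt hx (by omega)
  rcases eq_zero_or_min'_le_of_mem_genSg hA hs with rfl | hms
  · omega
  · have := Nat.mul_le_mul_left d hms
    omega

theorem gaps_below_gamma (A : Finset ℕ) (hA : A.Nonempty) (d γ : ℕ)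
    (hd : 2 ≤ d) (hco : Nat.Coprime d γ)
    (hS : IsNumericalSemigroup (GenSg ↑A))
    (hγF : (γ : ℤ) > d * Frob (GenSg ↑A)) (hγA : ∀ a ∈ A, d * a < γ) :
    (∀ x : ℕ, 1 ≤ x → x ≤ d * A.min' hA - 1 → x ∉ Gluing (GenSg ↑A) d γ) ∧
    (∀ x : ℕ, d * A.min' hA < x → x < γ →
      (¬ ∃ s ∈ GenSg (↑A : Set ℕ), x = d * s) →
      x ∉ Gluing (GenSg ↑A) d γ) :=
  gaps_below_gamma_general A hA d γ hγA
end

section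
/- Let S̄ = S ⊕_{d,γ} ℕ be a GSI-semigroup with S = ⟨v₀,…,v_h⟩, v₀ < ⋯ < v_h, d ≥ 2, gcd(d,γ)=1 and γ > max{d·F(S), d·v_h}. For 1 ≤ ℓ ≤ d−2, every element of B_{d,ℓ} = {γ + (ℓγ mod d) + kd : 0 ≤ k ≤ ⌊ℓγ/d⌋ − 1} is a gap of S̄. -/
theorem gaps_Bdl (A : Finset ℕ) (hA : A.Nonempty) (d γ : ℕ) (hd : 2 ≤ d)
    (hco : Nat.Coprime d γ) (hS : IsNumericalSemigroup (GenSg ↑A))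
    (hγF : (γ : ℤ) > d * Frob (GenSg ↑A)) (hγA : ∀ a ∈ A, d * a < γ) :
    ∀ l, 1 ≤ l → l ≤ d - 2 → ∀ k : ℕ, k + 1 ≤ l * γ / d →
      γ + (l * γ) % d + k * d ∉ Gluing (GenSg ↑A) d γ := by
  intro l hl1 hl2 k hk hx
  obtain ⟨s, hs, m, hm⟩ := hx
  have hγ : 0 < γ := by
    rcases Nat.eq_zero_or_pos γ with h | h
    · exfalso; subst h; simp [Nat.Coprime] at hco; omega
    · exact h
  have hd0 : 0 < d := by omega
  have hdiv : d * (l * γ / d) + l * γ % d = l * γ := Nat.div_add_mod _ _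
  have h1 : d * (k + 1) ≤ d * (l * γ / d) := Nat.mul_le_mul_left d hk
  have h1' : k * d + d = d * (k + 1) := by ring
  have hxlt : γ + l * γ % d + k * d < l * γ + γ := by omega
  -- hence m ≤ l
  have hml : m ≤ l := by
    by_contra hc
    push_neg at hc
    have h2 : (l + 1) * γ ≤ m * γ := Nat.mul_le_mul_right γ hc
    have h3 : (l + 1) * γ = l * γ + γ := by ring
    omega
  -- congruence mod d
  have hz : (m : ZMod d) = ((l + 1 : ℕ) : ZMod d) := by
    have hcast : ((γ + l * γ % d + k * d : ℕ) : ZMod d)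
        = ((d * s + m * γ : ℕ) : ZMod d) := by exact_mod_cast congrArg _ hm
    push_cast [ZMod.natCast_mod] at hcast
    simp [ZMod.natCast_self] at hcast
    have hu : IsUnit (γ : ZMod d) := by
      haveI : NeZero d := ⟨by omega⟩
      exact (ZMod.isUnit_iff_coprime γ d).2 hco.symm
    have : ((l + 1 : ℕ) : ZMod d) * (γ : ZMod d) = (m : ZMod d) * (γ : ZMod d) := by
      push_cast
      ring_nf
      ring_nf at hcast
      linear_combination hcast
    exact (hu.mul_right_cancel this).symm
  have hmod : m % d = (l + 1) % d := by
    haveI : NeZero d := ⟨by omega⟩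
    have := (ZMod.natCast_eq_natCast_iff m (l + 1) d).1 hz
    exact this
  have hmd : m < d := by omega
  have hld : l + 1 < d := by omega
  rw [Nat.mod_eq_of_lt hmd, Nat.mod_eq_of_lt hld] at hmod
  omega
end

section
/- Let S̄ = S ⊕_{d,γ} ℕ be a GSI-semigroup with S ≠ ℕ, S = ⟨v₀,…,v_h⟩, v₀ < ⋯ < v_h, d ≥ 2, gcd(d,γ)=1, γ > max{d·F(S), d·v_h}. Then the Frobenius number of S̄ is F(S̄) = d·F(S) + (d−1)·γ. -/
set_option maxHeartbeats 1000000


theorem frobenius_of_GSI (A : Finset ℕ) (hA : A.Nonempty) (d γ : ℕ)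
    (hd : 2 ≤ d) (hco : Nat.Coprime d γ)
    (hS : IsNumericalSemigroup (GenSg ↑A))
    (hne : GenSg (↑A : Set ℕ) ≠ Set.univ)
    (hγF : (γ : ℤ) > d * Frob (GenSg ↑A)) (hγA : ∀ a ∈ A, d * a < γ) :
    Frob (Gluing (GenSg ↑A) d γ) =
      d * Frob (GenSg ↑A) + ((d : ℤ) - 1) * γ := by
  obtain ⟨h0, hadd, hfin⟩ := hS
  set S := GenSg (↑A : Set ℕ) with hSdef
  have hcne : Sᶜ.Nonempty := by rwa [Set.nonempty_compl]
  set Fs : Set ℤ := ((fun n : ℕ => (n : ℤ)) '' Sᶜ) ∪ {-1} with hFsdef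
  have hFsfin : Fs.Finite := (hfin.image _).union (Set.finite_singleton _)
  have hFsne : Fs.Nonempty := ⟨-1, Or.inr rfl⟩
  have hmem : Frob S ∈ Fs := hFsne.csSup_mem hFsfin
  have hub : ∀ x ∈ Fs, x ≤ Frob S := fun x hx => le_csSup hFsfin.bddAbove hx
  obtain ⟨F, hFS, hFrob⟩ : ∃ F : ℕ, F ∉ S ∧ Frob S = (F : ℤ) := by
    rcases hmem with ⟨F, hF, hFeq⟩ | h
    · exact ⟨F, hF, hFeq.symm⟩
    · exfalso
      obtain ⟨m, hm⟩ := hcne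
      have h1 := hub (m : ℤ) (Or.inl ⟨m, hm, rfl⟩)
      rw [Set.mem_singleton_iff] at h
      rw [h] at h1
      omega
  have hF1 : 1 ≤ F := by
    rcases Nat.eq_zero_or_pos F with h | h
    · exact absurd (h ▸ h0) hFS
    · exact h
  have hbig : ∀ m : ℕ, F < m → m ∈ S := by
    intro m hm
    by_contra hms
    have := hub (m : ℤ) (Or.inl ⟨m, hms, rfl⟩)
    rw [hFrob] at this
    exact absurd (Nat.cast_le.mp this) (Nat.not_le.mpr hm)
  have hγF' : (d : ℤ) * F < γ := by rwa [hFrob] at hγF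
  have hγ1 : 1 ≤ γ := by
    by_contra h
    have : γ = 0 := by omega
    rw [this] at hγF'
    push_cast at hγF'
    nlinarith [Nat.cast_nonneg (α := ℤ) F, Nat.cast_le (α := ℤ).mpr hF1,
      Nat.cast_le (α := ℤ).mpr hd]
  set N : ℕ := d * F + (d - 1) * γ with hNdef
  have hNcast : (N : ℤ) = d * F + ((d : ℤ) - 1) * γ := by
    have : ((d - 1 : ℕ) : ℤ) = (d : ℤ) - 1 := by
      have := Nat.cast_le (α := ℤ).mpr hd; push_cast; omega
    push_cast [hNdef]
    rw [Nat.cast_sub (by omega)]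
    push_cast; ring
  have hdZ : (2 : ℤ) ≤ d := by exact_mod_cast hd
  have hFZ : (1 : ℤ) ≤ F := by exact_mod_cast hF1
  have hγZ : (1 : ℤ) ≤ γ := by exact_mod_cast hγ1
  have hcop : IsCoprime (d : ℤ) (γ : ℤ) := by
    rw [Int.isCoprime_iff_gcd_eq_one]
    exact_mod_cast hco
  -- Part 1 : N is not in the gluing
  have hNnot : N ∉ Gluing S d γ := by
    rintro ⟨s, hs, k, heq⟩
    have heqZ : (d : ℤ) * F + ((d : ℤ) - 1) * γ = d * s + k * γ := by
      rw [← hNcast]; exact_mod_cast heq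
    have hdvd : (d : ℤ) ∣ ((d : ℤ) - 1 - k) * γ := ⟨s - F, by ring_nf; linarith [heqZ]⟩
    have hdvd2 : (d : ℤ) ∣ ((d : ℤ) - 1 - k) := hcop.dvd_of_dvd_mul_right hdvd
    obtain ⟨t, ht⟩ := hdvd2
    have hseq : (s : ℤ) = F + t * γ := by
      have h1 : (d : ℤ) * s = d * F + d * (t * γ) := by nlinarith [heqZ, ht]
      have h2 : (d : ℤ) * s = d * (F + t * γ) := by linarith
      have := mul_left_cancel₀ (by omega : (d : ℤ) ≠ 0) h2
      linarith
    have hknn : (0 : ℤ) ≤ k := Nat.cast_nonneg k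
    have ht0 : t ≤ 0 := by nlinarith
    rcases eq_or_lt_of_le ht0 with h | h
    · have : (s : ℤ) = F := by rw [hseq, h]; ring
      have : s = F := by exact_mod_cast this
      exact hFS (this ▸ hs)
    · have htm1 : t ≤ -1 := by omega
      have hsnn : (0 : ℤ) ≤ s := Nat.cast_nonneg s
      nlinarith
  -- Part 2 : everything above N is in the gluing
  have hall : ∀ m : ℕ, N < m → m ∈ Gluing S d γ := by
    intro m hm
    haveI : NeZero d := ⟨by omega⟩
    obtain ⟨k, hkd, hkg⟩ : ∃ k : ℕ, k < d ∧ ((k * γ : ℕ) : ZMod d) = (m : ZMod d) := by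
      have hunit : IsUnit ((γ : ℕ) : ZMod d) := (ZMod.isUnit_iff_coprime γ d).mpr hco.symm
      refine ⟨((m : ZMod d) * (γ : ZMod d)⁻¹).val, ZMod.val_lt _, ?_⟩
      push_cast
      rw [ZMod.natCast_val, ZMod.cast_id]
      rw [mul_assoc, ZMod.inv_mul_of_unit _ hunit, mul_one]
    have hmod : (d : ℤ) ∣ (m : ℤ) - (k * γ : ℕ) := by
      have := (ZMod.natCast_eq_natCast_iff _ _ _).mp hkg
      exact this.dvd
    obtain ⟨s', hs'⟩ := hmod
    have hmZ : (N : ℤ) < m := by exact_mod_cast hm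
    rw [hNcast] at hmZ
    have hkZ : (k : ℤ) ≤ (d : ℤ) - 1 := by
      have : (k : ℤ) < d := by exact_mod_cast hkd
      omega
    have hs'F : (F : ℤ) < s' := by
      have h1 : (d : ℤ) * F < d * s' := by
        push_cast at hs'
        have hkγ : (k:ℤ) * γ ≤ ((d:ℤ) - 1) * γ :=
          mul_le_mul_of_nonneg_right hkZ (by linarith)
        linarith
      exact lt_of_mul_lt_mul_left h1 (by omega)
    have hs'nn : 0 ≤ s' := by linarith
    have hsS : s'.toNat ∈ S := by
      apply hbig
      have : (F : ℤ) < (s'.toNat : ℤ) := by rwa [Int.toNat_of_nonneg hs'nn]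
      exact_mod_cast this
    refine ⟨s'.toNat, hsS, k, ?_⟩
    have : (m : ℤ) = d * s'.toNat + k * γ := by
      rw [Int.toNat_of_nonneg hs'nn]
      push_cast at hs' ⊢
      linarith
    exact_mod_cast this
  -- Conclude
  have hgr : IsGreatest (((fun n : ℕ => (n : ℤ)) '' (Gluing S d γ)ᶜ) ∪ {-1}) (N : ℤ) := by
    constructor
    · exact Or.inl ⟨N, hNnot, rfl⟩
    · rintro x (⟨m, hmc, rfl⟩ | hx)
      · by_contra h
        push_neg at h
        have : N < m := by exact_mod_cast h
        exact hmc (hall m this)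
      · rw [Set.mem_singleton_iff] at hx
        rw [hx]
        omega
  rw [Frob, hgr.csSup_eq, hNcast, hFrob]
end

section
/- For every even number f ≥ 10, the numerical semigroup S_f minimally generated by A = {f/2 − 1, f/2 + 2, f/2 + 3, …, f − 3, f − 1} (i.e., f/2 − 1 together with all integers from f/2 + 2 through 2(f/2 − 1) − 1 = f − 3, and 2(f/2 − 1) + 1 = f − 1) has Frobenius number exactly f, and A is a minimal generating set of S_f. -/
def Aset (m : ℕ) : Set ℕ := {m} ∪ Set.Icc (m+3) (2*m-1) ∪ {2*m+1}

def Tset (m : ℕ) : Set ℕ :=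
  {n | n = 0 ∨ n = m ∨ (m + 3 ≤ n ∧ n ≤ 2*m+1) ∨ 2*m+3 ≤ n}

lemma mem_Aset {m x : ℕ} : x ∈ Aset m ↔ x = m ∨ (m+3 ≤ x ∧ x ≤ 2*m-1) ∨ x = 2*m+1 := by
  simp [Aset, Set.mem_union, Set.mem_Icc, Set.mem_singleton_iff]
  tauto

def Tsg (m : ℕ) (hm : 4 ≤ m) : AddSubmonoid ℕ where
  carrier := Tset m
  zero_mem' := Or.inl rfl
  add_mem' := by
    intro a b ha hb
    simp only [Tset, Set.mem_setOf_eq] at *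
    omega

def Tsub (m a : ℕ) (hm : 4 ≤ m)
    (ha : a = m ∨ (m+3 ≤ a ∧ a ≤ 2*m-1) ∨ a = 2*m+1) : AddSubmonoid ℕ where
  carrier := Tset m \ {a}
  zero_mem' := ⟨Or.inl rfl, by simp; omega⟩
  add_mem' := by
    rintro x y ⟨hx, hx'⟩ ⟨hy, hy'⟩
    simp only [Tset, Set.mem_setOf_eq, Set.mem_diff, Set.mem_singleton_iff] at *
    omega

lemma mid_mem (m : ℕ) (hm : 4 ≤ m) {k : ℕ} (h1 : m+3 ≤ k) (h2 : k ≤ 2*m+1) :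
    k ∈ AddSubmonoid.closure (Aset m) := by
  rcases Nat.lt_or_ge k (2*m) with h | h
  · exact AddSubmonoid.subset_closure (mem_Aset.mpr (Or.inr (Or.inl ⟨h1, by omega⟩)))
  · rcases Nat.eq_or_lt_of_le h with h' | h'
    · have hk : k = m + m := by omega
      rw [hk]
      exact add_mem (AddSubmonoid.subset_closure (mem_Aset.mpr (Or.inl rfl)))
        (AddSubmonoid.subset_closure (mem_Aset.mpr (Or.inl rfl)))
    · have hk : k = 2*m+1 := by omega
      rw [hk]
      exact AddSubmonoid.subset_closure (mem_Aset.mpr (Or.inr (Or.inr rfl)))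

lemma high_mem (m : ℕ) (hm : 4 ≤ m) : ∀ n, 2*m+3 ≤ n → n ∈ AddSubmonoid.closure (Aset m) := by
  intro n
  induction n using Nat.strong_induction_on with
  | _ n ih =>
    intro hn
    have hmmem : m ∈ AddSubmonoid.closure (Aset m) :=
      AddSubmonoid.subset_closure (mem_Aset.mpr (Or.inl rfl))
    rcases Nat.lt_or_ge n (3*m+2) with h | h
    · have hk : n = m + (n - m) := by omega
      rw [hk]
      exact add_mem hmmem (mid_mem m hm (by omega) (by omega))
    · rcases Nat.eq_or_lt_of_le h with h' | h'
      · have hk : n = (m+3) + (2*m-1) := by omega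
        rw [hk]
        exact add_mem
          (AddSubmonoid.subset_closure (mem_Aset.mpr (Or.inr (Or.inl ⟨le_refl _, by omega⟩))))
          (AddSubmonoid.subset_closure (mem_Aset.mpr (Or.inr (Or.inl ⟨by omega, le_refl _⟩))))
      · have hk : n = m + (n - m) := by omega
        rw [hk]
        exact add_mem hmmem (ih (n-m) (by omega) (by omega))

lemma genA_eq (m : ℕ) (hm : 4 ≤ m) : GenSg (Aset m) = Tset m := by
  apply Set.Subset.antisymm
  · refine AddSubmonoid.closure_le.mpr (fun x hx => ?_ : Aset m ⊆ ↑(Tsg m hm))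
    have h := mem_Aset.mp hx
    show x ∈ Tset m
    simp only [Tset, Set.mem_setOf_eq]
    omega
  · rintro n (h0 | hmn | ⟨h1, h2⟩ | hh)
    · rw [h0]; exact zero_mem _
    · rw [hmn]; exact AddSubmonoid.subset_closure (mem_Aset.mpr (Or.inl rfl))
    · exact mid_mem m hm h1 h2
    · exact high_mem m hm n hh

lemma frob_T (m : ℕ) (hm : 4 ≤ m) : Frob (Tset m) = (2*m+2 : ℤ) := by
  unfold Frob
  apply le_antisymm
  · apply csSup_le (Set.nonempty_of_mem (Set.mem_union_right _ (Set.mem_singleton (-1))))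
    rintro x (⟨n, hn, rfl⟩ | (hx : x = -1))
    · simp only [Tset, Set.mem_compl_iff, Set.mem_setOf_eq] at hn
      have : n ≤ 2*m+2 := by omega
      push_cast
      omega
    · rw [hx]
      omega
  · apply le_csSup
    · refine ⟨(2*m+2 : ℤ), ?_⟩
      rintro x (⟨n, hn, rfl⟩ | (hx : x = -1))
      · simp only [Tset, Set.mem_compl_iff, Set.mem_setOf_eq] at hn
        have : n ≤ 2*m+2 := by omega
        push_cast
        omega
      · rw [hx]
        omega
    · left
      refine ⟨2*m+2, ?_, by push_cast; ring⟩
      simp only [Tset, Set.mem_compl_iff, Set.mem_setOf_eq]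
      omega

lemma A_sub_T (m : ℕ) (hm : 4 ≤ m) {x : ℕ} (hx : x ∈ Aset m) : x ∈ Tset m := by
  have h := mem_Aset.mp hx
  simp only [Tset, Set.mem_setOf_eq]
  omega

theorem even_frobenius_family (f : ℕ) (hf : Even f) (h10 : 10 ≤ f) :
    Frob (GenSg ({f / 2 - 1} ∪ Set.Icc (f / 2 + 2) (f - 3) ∪ {f - 1})) =
      (f : ℤ) ∧
    ∀ B ⊂ ({f / 2 - 1} ∪ Set.Icc (f / 2 + 2) (f - 3) ∪ {f - 1} : Set ℕ),
      GenSg B ≠ GenSg ({f / 2 - 1} ∪ Set.Icc (f / 2 + 2) (f - 3) ∪ {f - 1}) := by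
  obtain ⟨r, hr⟩ := hf
  have hm : 4 ≤ r - 1 := by omega
  have e1 : f / 2 - 1 = r - 1 := by omega
  have e2 : f / 2 + 2 = (r - 1) + 3 := by omega
  have e3 : f - 3 = 2 * (r - 1) - 1 := by omega
  have e4 : f - 1 = 2 * (r - 1) + 1 := by omega
  rw [e1, e2, e3, e4]
  have hA : ({r - 1} ∪ Set.Icc ((r-1)+3) (2*(r-1)-1) ∪ {2*(r-1)+1} : Set ℕ) = Aset (r-1) := rfl
  rw [hA]
  constructor
  · rw [genA_eq (r-1) hm, frob_T (r-1) hm]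
    have hfr : f = 2 * (r - 1) + 2 := by omega
    rw [hfr]
    push_cast
    ring
  · intro B hB heq
    obtain ⟨a, haA, haB⟩ := Set.exists_of_ssubset hB
    have ha' : a = (r-1) ∨ ((r-1)+3 ≤ a ∧ a ≤ 2*(r-1)-1) ∨ a = 2*(r-1)+1 := mem_Aset.mp haA
    have hmem : a ∈ GenSg (Aset (r-1)) := AddSubmonoid.subset_closure haA
    rw [← heq] at hmem
    have hsub : AddSubmonoid.closure B ≤ Tsub (r-1) a hm ha' := by
      apply AddSubmonoid.closure_le.mpr
      intro x hx
      refine ⟨A_sub_T (r-1) hm (hB.subset hx), ?_⟩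
      intro hxa
      have : x = a := hxa
      exact haB (this ▸ hx)
    have h2 : a ∈ Tset (r-1) \ {a} := hsub hmem
    exact h2.2 rfl
end
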